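/- Let N ≥ 3 and let n be a positive real number. Define u : ℝ^N → ℝ by u(x) = x_N ∏_{i=1}^{N−1} sin²(n xᵢ). Then for every x ∈ ℝ^N, det(D²u)(x) = −(−2)^N n^{2(N−1)} x_N^{N−2} (∏_{i=1}^{N−1} sin(n xᵢ))^{2(N−1)} (Σ_{j=1}^{N−1} cos²(n x_j)). In particular det(D²u) has a constant sign on the half-space {x : x_N > 0}. -/

import Mathlib

open MeasureTheory Real Filter

noncomputable section

abbrev Eu (N : ℕ) : Type := EuclideanSpace ℝ (Fin N)

def ebasis {N : ℕ} (i : Fin N) : Eu N := EuclideanSpace.single i 1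

/-- Partial derivative `∂ᵢ u (x)`. -/
def pd {N : ℕ} (u : Eu N → ℝ) (i : Fin N) (x : Eu N) : ℝ :=
  fderiv ℝ u x (ebasis i)

/-- Second partial derivative `∂ᵢ∂ⱼ u (x)`. -/
def pd2 {N : ℕ} (u : Eu N → ℝ) (i j : Fin N) (x : Eu N) : ℝ :=
  fderiv ℝ (fun y => fderiv ℝ u y (ebasis j)) x (ebasis i)

/-- The determinant of the Hessian matrix `det (D²u)(x)`. -/
def hessDet {N : ℕ} (u : Eu N → ℝ) (x : Eu N) : ℝ :=
  (Matrix.of fun i j => pd2 u i j x).det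

/-- The Besov norm `‖u‖_{s,p}`. -/
def besov (N : ℕ) (s p : ℝ) (u : Eu N → ℝ) : ℝ :=
  (∫ x : Eu N, |u x| ^ p) ^ (1/p)
  + (∫ x : Eu N, ‖fderiv ℝ u x‖ ^ p) ^ (1/p)
  + (∫ x : Eu N, ∫ y : Eu N,
      ‖fderiv ℝ u x - fderiv ℝ u y‖ ^ p / ‖x - y‖ ^ ((N : ℝ) + (s-1)*p)) ^ (1/p)

/-- The index of the last coordinate (`x_N`) of `ℝ^N`. -/
def lastIdx (N : ℕ) (hN : 0 < N) : Fin N := ⟨N - 1, Nat.sub_lt hN Nat.one_pos⟩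

/-- The lacunary sequence `n_ℓ = k^{N^{3ℓ}}`. -/
def nseq (N k l : ℕ) : ℕ := k ^ (N ^ (3 * l))

/-- `∏_{i=1}^{N-1} sin²(n xᵢ)`. -/
def gfun (N : ℕ) (n : ℝ) (x : Eu N) : ℝ :=
  ∏ i : Fin (N-1), (Real.sin (n * x (Fin.castLE (Nat.sub_le N 1) i)))^2

/-- The atom `f(x) = x_N ∏_{i=1}^{N-1} sin²(n xᵢ)`. -/
def ffun (N : ℕ) (hN : 0 < N) (n : ℝ) (x : Eu N) : ℝ :=
  x (lastIdx N hN) * gfun N n x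

/-- `w_k(x) = Σ_{ℓ=1}^k n_ℓ^{-(2-2/N)} ℓ^{-1/N} ∏_{i=1}^{N-1} sin²(n_ℓ xᵢ)`. -/
def wfun (N k : ℕ) (x : Eu N) : ℝ :=
  ∑ l ∈ Finset.Icc 1 k,
    ((nseq N k l : ℝ)) ^ (-(2 - 2/(N:ℝ))) * ((l : ℝ)) ^ (-(1/(N:ℝ))) * gfun N (nseq N k l) x

/-- `u_k(x) = χ(x) w_k(x) x_N`. -/
def ufun (N : ℕ) (hN : 0 < N) (k : ℕ) (χ : Eu N → ℝ) (x : Eu N) : ℝ :=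
  χ x * wfun N k x * x (lastIdx N hN)

/-- The `C²` norm: supremum of all partial derivatives of order `≤ 2`. -/
def C2norm {N : ℕ} (φ : Eu N → ℝ) : ℝ :=
  ⨆ x : Eu N, max |φ x| (max (‖iteratedFDeriv ℝ 1 φ x‖) (‖iteratedFDeriv ℝ 2 φ x‖))

/-- The `C¹` norm: supremum of all partial derivatives of order `≤ 1`. -/
def C1norm {N : ℕ} (φ : Eu N → ℝ) : ℝ :=
  ⨆ x : Eu N, max |φ x| (‖iteratedFDeriv ℝ 1 φ x‖)

/-- Glue `x̂ ∈ ℝ^{N-1}` and `t ∈ ℝ` into the point `(x̂, t) ∈ ℝ^N`. -/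
def glue (N : ℕ) (hN : 0 < N) (xh : Eu (N-1)) (t : ℝ) : Eu N :=
  WithLp.toLp 2 (fun i => if h : (i : ℕ) < N - 1 then xh ⟨i, h⟩ else t)

/-!
Every second partial derivative of `x_N ∏ₖ f (x_k)` is `0`, `1` or `x_N` times a product
`∏ₖ f^{(φ k)} (x_k)` indexed by a multi-index `φ`. Write `t = x_N`, `s_k = sin (n x_k)`,
`c_k = cos (n x_k)`, `a = ∏ₖ s_k` and `Q_i = ∏_{k ≠ i} s_k`. For `f = sin² (n ·)` the Hessian
factors as `D K D` with `D = diag (Q_1, …, Q_{N-1}, 1)` and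
`K = [[α I - 2α c cᵀ, γ c], [γ cᵀ, 0]]`, where `α = -2n²t` and `γ = 2na`.
Linearity in the last column gives `det K = det (A - γ² c cᵀ) - det A` for the top-left block `A`;
both are values at `α` of characteristic polynomials of multiples of `c cᵀ`, so
`det K = -γ² |c|² α^{N-2}`, while `det D = a^{N-2}`. The sign statement follows because only
`t^{N-2}` can be negative.
-/

open Finset
open scoped ContDiff

lemma Finset.prod_prod_univ_erase {M : Type*} [CommMonoid M] {κ : Type*} [Fintype κ]
    [DecidableEq κ] (g : κ → M) :
    ∏ i, ∏ k ∈ univ.erase i, g k = (∏ k, g k) ^ (Fintype.card κ - 1) := by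
  rw [prod_comm' (t' := univ) (s' := fun k => univ.erase k) (by simp [eq_comm]), ← prod_pow]
  refine prod_congr rfl fun k _ => ?_
  rw [prod_const, card_erase_of_mem (mem_univ k), card_univ]

namespace Matrix

variable {m ι R : Type*} [Fintype m] [DecidableEq m] [Fintype ι] [DecidableEq ι] [Unique ι]
  [CommRing R]

theorem det_scalar_sub_vecMulVec (α : R) (u v : m → R) :
    (scalar m α - vecMulVec u v).det =
      α ^ Fintype.card m - (u ⬝ᵥ v) * α ^ (Fintype.card m - 1) := by
  rw [← eval_charpoly, charpoly_vecMulVec]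
  simp

theorem det_fromBlocks_replicateCol_replicateRow_zero (A : Matrix m m R) (b c : m → R) :
    (fromBlocks A (replicateCol ι b) (replicateRow ι c) 0).det =
      (A - vecMulVec b c).det - A.det := by
  set M := fromBlocks A (replicateCol ι b) (replicateRow ι c) 0
  have hsplit : updateCol M (Sum.inr default) ((fun p => M p (Sum.inr default)) +
      Pi.single (Sum.inr default) 1) = fromBlocks A (replicateCol ι b) (replicateRow ι c) 1 := by
    ext (i | i) (j | j) <;> simp [M, Unique.eq_default]
  have hcorner : updateCol M (Sum.inr default) (Pi.single (Sum.inr default) 1) =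
      fromBlocks A 0 (replicateRow ι c) 1 := by
    ext (i | i) (j | j) <;> simp [M, Unique.eq_default]
  have hdet := congrArg det hsplit
  rw [det_updateCol_add, hcorner, det_fromBlocks_zero₁₂, det_fromBlocks_one₂₂,
    updateCol_eq_self, det_one, mul_one] at hdet
  have hmul : replicateCol ι b * replicateRow ι c = vecMulVec b c := by
    ext i j
    simp [mul_apply, vecMulVec_apply]
  rw [← hmul, ← hdet, add_sub_cancel_right]

theorem det_fromBlocks_scalar_sub_vecMulVec_zero (α μ γ : R) (c : m → R) :
    (fromBlocks (scalar m α - vecMulVec (μ • c) c) (replicateCol ι (γ • c))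
      (replicateRow ι (γ • c)) 0).det = -(γ ^ 2 * (c ⬝ᵥ c) * α ^ (Fintype.card m - 1)) := by
  have hsum : vecMulVec (μ • c) c + vecMulVec (γ • c) (γ • c) = vecMulVec ((μ + γ ^ 2) • c) c := by
    ext i j
    simp only [add_apply, vecMulVec_apply, Pi.smul_apply, smul_eq_mul]
    ring
  rw [det_fromBlocks_replicateCol_replicateRow_zero, sub_sub, hsum, det_scalar_sub_vecMulVec,
    det_scalar_sub_vecMulVec, smul_dotProduct, smul_dotProduct, smul_eq_mul, smul_eq_mul]
  ring

end Matrix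

section CoordProd

variable {N : ℕ} {κ : Type*} [Fintype κ]

lemma ebasis_apply (i k : Fin N) : ebasis i k = if k = i then 1 else 0 := by
  simp [ebasis, PiLp.single_apply]

lemma hasFDerivAt_coord (k : Fin N) (x : Eu N) :
    HasFDerivAt (fun y : Eu N => y k) (EuclideanSpace.proj (𝕜 := ℝ) k) x :=
  (EuclideanSpace.proj (𝕜 := ℝ) k).hasFDerivAt

lemma pd_coord (k i : Fin N) (x : Eu N) :
    pd (fun y : Eu N => y k) i x = if k = i then 1 else 0 := by
  rw [pd, (hasFDerivAt_coord k x).fderiv]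
  exact ebasis_apply i k

lemma pd_mul {u v : Eu N → ℝ} {x : Eu N} (hu : DifferentiableAt ℝ u x)
    (hv : DifferentiableAt ℝ v x) (i : Fin N) :
    pd (fun y => u y * v y) i x = pd u i x * v x + u x * pd v i x := by
  simp only [pd, fderiv_fun_mul hu hv, add_apply, smul_apply, smul_eq_mul]
  ring

def coordProd (e : κ → Fin N) (f : ℝ → ℝ) (φ : κ → ℕ) (y : Eu N) : ℝ :=
  ∏ k, iteratedDeriv (φ k) f (y (e k))

variable [DecidableEq κ] {e : κ → Fin N} {f : ℝ → ℝ}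

lemma hasFDerivAt_coordProd (hf : ContDiff ℝ ∞ f) (φ : κ → ℕ) (x : Eu N) :
    HasFDerivAt (coordProd e f φ)
      (∑ k, (∏ j ∈ univ.erase k, iteratedDeriv (φ j) f (x (e j))) •
        iteratedDeriv (φ k + 1) f (x (e k)) • EuclideanSpace.proj (𝕜 := ℝ) (e k)) x := by
  refine HasFDerivAt.finsetProd fun k _ => ?_
  have hd := ((hf.differentiable_iteratedDeriv (φ k)
    (by exact_mod_cast ENat.natCast_lt_top _)).differentiableAt (x := x (e k))).hasDerivAt
  rw [← iteratedDeriv_succ] at hd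
  exact hd.comp_hasFDerivAt x (hasFDerivAt_coord (e k) x)

lemma pd_coordProd_apply (hf : ContDiff ℝ ∞ f) (he : Function.Injective e) (φ : κ → ℕ)
    (k : κ) (x : Eu N) :
    pd (coordProd e f φ) (e k) x = coordProd e f (φ + Pi.single k 1) x := by
  rw [pd, (hasFDerivAt_coordProd hf φ x).fderiv]
  simp only [_root_.sum_apply, smul_apply, PiLp.proj_apply, ebasis_apply,
    he.eq_iff, smul_eq_mul, mul_ite, mul_one, mul_zero, sum_ite_eq', mem_univ, if_true]
  rw [coordProd, ← mul_prod_erase univ _ (mem_univ k), mul_comm]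
  congr 1
  · simp
  · refine prod_congr rfl fun j hj => ?_
    simp [ne_of_mem_erase hj]

lemma pd_coordProd_of_notMem_range (hf : ContDiff ℝ ∞ f) {ℓ : Fin N} (hℓ : ∀ k, e k ≠ ℓ)
    (φ : κ → ℕ) (x : Eu N) : pd (coordProd e f φ) ℓ x = 0 := by
  rw [pd, (hasFDerivAt_coordProd hf φ x).fderiv]
  simp [ebasis_apply, hℓ]

end CoordProd

section Hessian

open Matrix

variable {N : ℕ} {κ : Type*} [Fintype κ] [DecidableEq κ] {e : κ → Fin N} {f : ℝ → ℝ}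
  {ℓ : Fin N}

def hessian (u : Eu N → ℝ) (x : Eu N) : Matrix (Fin N) (Fin N) ℝ :=
  of fun i j => pd2 u i j x

lemma hessDet_eq_det_hessian (u : Eu N → ℝ) (x : Eu N) : hessDet u x = (hessian u x).det := rfl

lemma pd2_eq_pd_pd (u : Eu N → ℝ) (i j : Fin N) (x : Eu N) : pd2 u i j x = pd (pd u j) i x := rfl

lemma pd_coord_mul_coordProd_apply (hf : ContDiff ℝ ∞ f) (he : Function.Injective e)
    (hℓ : ∀ k, e k ≠ ℓ) (φ : κ → ℕ) (k : κ) :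
    pd (fun y => y ℓ * coordProd e f φ y) (e k) =
      fun y => y ℓ * coordProd e f (φ + Pi.single k 1) y := by
  funext y
  rw [pd_mul (hasFDerivAt_coord ℓ y).differentiableAt
    (hasFDerivAt_coordProd hf φ y).differentiableAt, pd_coord, if_neg (hℓ k).symm,
    pd_coordProd_apply hf he, zero_mul, zero_add]

lemma pd_coord_mul_coordProd_self (hf : ContDiff ℝ ∞ f) (hℓ : ∀ k, e k ≠ ℓ) (φ : κ → ℕ) :
    pd (fun y => y ℓ * coordProd e f φ y) ℓ = coordProd e f φ := by
  funext y
  rw [pd_mul (hasFDerivAt_coord ℓ y).differentiableAt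
    (hasFDerivAt_coordProd hf φ y).differentiableAt, pd_coord, if_pos rfl,
    pd_coordProd_of_notMem_range hf hℓ, one_mul, mul_zero, add_zero]

lemma pd2_coord_mul_coordProd_apply_apply (hf : ContDiff ℝ ∞ f) (he : Function.Injective e)
    (hℓ : ∀ k, e k ≠ ℓ) (φ : κ → ℕ) (x : Eu N) (i j : κ) :
    pd2 (fun y => y ℓ * coordProd e f φ y) (e i) (e j) x =
      x ℓ * coordProd e f (φ + Pi.single j 1 + Pi.single i 1) x := by
  rw [pd2_eq_pd_pd, pd_coord_mul_coordProd_apply hf he hℓ, pd_coord_mul_coordProd_apply hf he hℓ]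

lemma pd2_coord_mul_coordProd_apply_self (hf : ContDiff ℝ ∞ f) (he : Function.Injective e)
    (hℓ : ∀ k, e k ≠ ℓ) (φ : κ → ℕ) (x : Eu N) (i : κ) :
    pd2 (fun y => y ℓ * coordProd e f φ y) (e i) ℓ x = coordProd e f (φ + Pi.single i 1) x := by
  rw [pd2_eq_pd_pd, pd_coord_mul_coordProd_self hf hℓ, pd_coordProd_apply hf he]

lemma pd2_coord_mul_coordProd_self_apply (hf : ContDiff ℝ ∞ f) (he : Function.Injective e)
    (hℓ : ∀ k, e k ≠ ℓ) (φ : κ → ℕ) (x : Eu N) (j : κ) :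
    pd2 (fun y => y ℓ * coordProd e f φ y) ℓ (e j) x = coordProd e f (φ + Pi.single j 1) x := by
  rw [pd2_eq_pd_pd, pd_coord_mul_coordProd_apply hf he hℓ, pd_coord_mul_coordProd_self hf hℓ]

lemma pd2_coord_mul_coordProd_self_self (hf : ContDiff ℝ ∞ f) (hℓ : ∀ k, e k ≠ ℓ) (φ : κ → ℕ)
    (x : Eu N) :
    pd2 (fun y => y ℓ * coordProd e f φ y) ℓ ℓ x = 0 := by
  rw [pd2_eq_pd_pd, pd_coord_mul_coordProd_self hf hℓ, pd_coordProd_of_notMem_range hf hℓ]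

lemma hessian_coord_mul_coordProd_submatrix (hf : ContDiff ℝ ∞ f) (σ : κ ⊕ Fin 1 ≃ Fin N)
    (φ : κ → ℕ) (x : Eu N) :
    (hessian (fun y => y (σ (.inr 0)) * coordProd (σ ∘ .inl) f φ y) x).submatrix σ σ =
      fromBlocks
        (of fun i j => x (σ (.inr 0)) *
          coordProd (σ ∘ .inl) f (φ + Pi.single j 1 + Pi.single i 1) x)
        (of fun i _ => coordProd (σ ∘ .inl) f (φ + Pi.single i 1) x)
        (of fun _ j => coordProd (σ ∘ .inl) f (φ + Pi.single j 1) x) 0 := by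
  have he : Function.Injective (σ ∘ .inl) := σ.injective.comp Sum.inl_injective
  have hℓ : ∀ k, (σ ∘ .inl) k ≠ σ (.inr 0) := fun k h => Sum.inl_ne_inr (σ.injective h)
  ext (i | i) (j | j)
  · exact pd2_coord_mul_coordProd_apply_apply hf he hℓ φ x i j
  · rw [Fin.fin_one_eq_zero j]
    exact pd2_coord_mul_coordProd_apply_self hf he hℓ φ x i
  · rw [Fin.fin_one_eq_zero i]
    exact pd2_coord_mul_coordProd_self_apply hf he hℓ φ x j
  · rw [Fin.fin_one_eq_zero i, Fin.fin_one_eq_zero j]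
    exact pd2_coord_mul_coordProd_self_self hf hℓ φ x

end Hessian

section SinSq

variable {κ : Type*} [Fintype κ] [DecidableEq κ] {N : ℕ}

lemma contDiff_sin_mul_sq (n : ℝ) : ContDiff ℝ ∞ (fun s => sin (n * s) ^ 2) := by fun_prop

lemma iteratedDeriv_one_sin_mul_sq (n : ℝ) :
    iteratedDeriv 1 (fun s => sin (n * s) ^ 2) = fun s => 2 * n * sin (n * s) * cos (n * s) := by
  funext s
  rw [iteratedDeriv_one]
  exact (((hasDerivAt_const_mul n).sin.fun_pow 2).congr_deriv (by ring)).deriv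

lemma iteratedDeriv_two_sin_mul_sq (n : ℝ) :
    iteratedDeriv 2 (fun s => sin (n * s) ^ 2) =
      fun s => 2 * n ^ 2 * (cos (n * s) ^ 2 - sin (n * s) ^ 2) := by
  funext s
  have h := hasDerivAt_const_mul (x := s) n
  rw [iteratedDeriv_succ, iteratedDeriv_one_sin_mul_sq]
  exact (((h.sin.const_mul (2 * n)).fun_mul h.cos).congr_deriv (by ring)).deriv

variable (e : κ → Fin N) (n : ℝ) (x : Eu N)

lemma coordProd_sin_mul_sq_single (i : κ) :
    coordProd e (fun s => sin (n * s) ^ 2) (Pi.single i 1) x =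
      (∏ k ∈ univ.erase i, sin (n * x (e k))) *
        (2 * n * cos (n * x (e i)) * ∏ k, sin (n * x (e k))) := by
  rw [coordProd, ← mul_prod_erase univ _ (mem_univ i), ← mul_prod_erase univ _ (mem_univ i),
    prod_congr rfl fun k hk => by rw [Pi.single_eq_of_ne (ne_of_mem_erase hk), iteratedDeriv_zero],
    prod_pow, Pi.single_eq_same, iteratedDeriv_one_sin_mul_sq]
  ring

lemma coordProd_sin_mul_sq_single_add_single (i j : κ) :
    coordProd e (fun s => sin (n * s) ^ 2) (Pi.single j 1 + Pi.single i 1) x =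
      (∏ k ∈ univ.erase i, sin (n * x (e k))) *
        (4 * n ^ 2 * cos (n * x (e i)) * cos (n * x (e j)) - if i = j then 2 * n ^ 2 else 0) *
        ∏ k ∈ univ.erase j, sin (n * x (e k)) := by
  rw [coordProd, ← mul_prod_erase univ _ (mem_univ i)]
  rcases eq_or_ne i j with rfl | hij
  · rw [prod_congr rfl fun k hk => by
      rw [Pi.add_apply, Pi.single_eq_of_ne (ne_of_mem_erase hk), add_zero, iteratedDeriv_zero],
      prod_pow, Pi.add_apply, Pi.single_eq_same, iteratedDeriv_two_sin_mul_sq, if_pos rfl]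
    linear_combination (-2 * n ^ 2 * (∏ k ∈ univ.erase i, sin (n * x (e k))) ^ 2) *
      sin_sq_add_cos_sq (n * x (e i))
  · have hji : j ∈ univ.erase i := mem_erase.2 ⟨hij.symm, mem_univ j⟩
    have hij' : i ∈ univ.erase j := mem_erase.2 ⟨hij, mem_univ i⟩
    rw [← mul_prod_erase _ _ hji, ← mul_prod_erase _ _ hji, ← mul_prod_erase _ _ hij',
      erase_right_comm, prod_congr rfl fun k hk => by
        rw [Pi.add_apply, Pi.single_eq_of_ne (ne_of_mem_erase hk),
          Pi.single_eq_of_ne (ne_of_mem_erase (mem_of_mem_erase hk)), add_zero,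
          iteratedDeriv_zero], prod_pow]
    simp only [Pi.add_apply, Pi.single_eq_same, Pi.single_eq_of_ne hij, Pi.single_eq_of_ne hij.symm,
      zero_add, add_zero, if_neg hij, iteratedDeriv_one_sin_mul_sq]
    ring

end SinSq

section Atom

open Matrix

def finPredSumOneEquiv (N : ℕ) (hN : 0 < N) : Fin (N - 1) ⊕ Fin 1 ≃ Fin N :=
  finSumFinEquiv.trans (finCongr (Nat.sub_add_cancel hN))

variable {N : ℕ} (hN : 0 < N)

lemma finPredSumOneEquiv_inl (i : Fin (N - 1)) :
    finPredSumOneEquiv N hN (.inl i) = Fin.castLE (Nat.sub_le N 1) i := by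
  ext; simp [finPredSumOneEquiv]

lemma finPredSumOneEquiv_inr (j : Fin 1) : finPredSumOneEquiv N hN (.inr j) = lastIdx N hN := by
  ext; simp [finPredSumOneEquiv, lastIdx, Fin.fin_one_eq_zero j]

lemma ffun_eq_coord_mul_coordProd (n : ℝ) :
    ffun N hN n = fun y => y (finPredSumOneEquiv N hN (.inr 0)) *
      coordProd (finPredSumOneEquiv N hN ∘ .inl) (fun s => sin (n * s) ^ 2) 0 y := by
  funext y
  simp [ffun, gfun, coordProd, finPredSumOneEquiv_inl, finPredSumOneEquiv_inr]

lemma hessDet_ffun (hN2 : 2 ≤ N) (n : ℝ) (x : Eu N) :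
    hessDet (ffun N hN n) x =
      -((-2 : ℝ) ^ N) * n ^ (2 * (N - 1)) * (x (lastIdx N hN)) ^ (N - 2) *
        (∏ i : Fin (N - 1), sin (n * x (Fin.castLE (Nat.sub_le N 1) i))) ^ (2 * (N - 1)) *
        ∑ j : Fin (N - 1), cos (n * x (Fin.castLE (Nat.sub_le N 1) j)) ^ 2 := by
  set σ := finPredSumOneEquiv N hN
  set t := x (lastIdx N hN)
  set s : Fin (N - 1) → ℝ := fun k => sin (n * x (Fin.castLE (Nat.sub_le N 1) k))
  set c : Fin (N - 1) → ℝ := fun k => cos (n * x (Fin.castLE (Nat.sub_le N 1) k))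
  set Q : Fin (N - 1) ⊕ Fin 1 → ℝ := Sum.elim (fun i => ∏ k ∈ univ.erase i, s k) 1
  have hblocks : (hessian (ffun N hN n) x).submatrix σ σ = diagonal Q *
      fromBlocks (scalar _ (-(2 * n ^ 2 * t)) - vecMulVec ((-(4 * n ^ 2 * t)) • c) c)
        (replicateCol (Fin 1) ((2 * n * ∏ k, s k) • c))
        (replicateRow (Fin 1) ((2 * n * ∏ k, s k) • c)) 0 * diagonal Q := by
    have hinl : σ ∘ Sum.inl = Fin.castLE (Nat.sub_le N 1) := funext (finPredSumOneEquiv_inl hN)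
    rw [ffun_eq_coord_mul_coordProd, hessian_coord_mul_coordProd_submatrix (contDiff_sin_mul_sq n),
      hinl, finPredSumOneEquiv_inr]
    ext (i | i) (j | j) <;>
      simp only [diagonal_mul, mul_diagonal, fromBlocks_apply₁₁, fromBlocks_apply₁₂,
        fromBlocks_apply₂₁, fromBlocks_apply₂₂, of_apply, zero_add, Q, Sum.elim_inl, Sum.elim_inr,
        Pi.one_apply, Matrix.sub_apply, scalar_apply, diagonal_apply, vecMulVec_apply,
        Pi.smul_apply, smul_eq_mul, replicateCol_apply, replicateRow_apply, Matrix.zero_apply,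
        mul_zero, zero_mul, coordProd_sin_mul_sq_single_add_single, coordProd_sin_mul_sq_single]
    · split_ifs <;> ring
    all_goals ring
  obtain ⟨k, hk⟩ : ∃ k, N = k + 2 := ⟨N - 2, by omega⟩
  rw [hessDet_eq_det_hessian, ← det_submatrix_equiv_self σ, hblocks, det_mul, det_mul,
    det_fromBlocks_scalar_sub_vecMulVec_zero, det_diagonal, Fintype.prod_sum_type]
  simp only [Q, Sum.elim_inl, Sum.elim_inr, Pi.one_apply, prod_const_one, mul_one, dotProduct,
    ← sq]
  rw [prod_prod_univ_erase, Fintype.card_fin, show N - 1 - 1 = k by omega, show N - 2 = k by omega,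
    show 2 * (N - 1) = 2 * (k + 1) by omega, show (-2 : ℝ) ^ N = (-2) ^ (k + 2) by rw [hk]]
  ring

lemma hessDet_ffun_mul_nonneg (hN2 : 2 ≤ N) (n : ℝ) {x y : Eu N} (hx : 0 < x (lastIdx N hN))
    (hy : 0 < y (lastIdx N hN)) : 0 ≤ hessDet (ffun N hN n) x * hessDet (ffun N hN n) y := by
  have hweight (z : Eu N) (hz : 0 < z (lastIdx N hN)) : 0 ≤ z (lastIdx N hN) ^ (N - 2) *
      (∏ i : Fin (N - 1), sin (n * z (Fin.castLE (Nat.sub_le N 1) i))) ^ (2 * (N - 1)) *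
      ∑ j : Fin (N - 1), cos (n * z (Fin.castLE (Nat.sub_le N 1) j)) ^ 2 :=
    mul_nonneg (mul_nonneg (pow_nonneg hz.le _) (by rw [pow_mul]; positivity)) (by positivity)
  rw [hessDet_ffun hN hN2, hessDet_ffun hN hN2]
  exact (mul_nonneg (sq_nonneg ((-2 : ℝ) ^ N * n ^ (2 * (N - 1))))
    (mul_nonneg (hweight x hx) (hweight y hy))).trans_eq (by ring)

end Atom

/-- The explicit Hessian determinant of the atom `u(x) = x_N ∏_{i=1}^{N-1} sin²(n xᵢ)`;
in particular it has constant sign on the half-space `{x : x_N > 0}`. -/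
theorem stmt9 (N : ℕ) (hN : 3 ≤ N) (n : ℝ)
    (u : Eu N → ℝ) (hu : ∀ x : Eu N, u x = ffun N (by omega) n x) :
    (∀ x : Eu N, hessDet u x =
      -((-2 : ℝ)^N) * n^(2*(N-1)) * (x (lastIdx N (by omega)))^(N-2) *
        (∏ i : Fin (N-1), Real.sin (n * x (Fin.castLE (Nat.sub_le N 1) i)))^(2*(N-1)) *
        ∑ j : Fin (N-1), (Real.cos (n * x (Fin.castLE (Nat.sub_le N 1) j)))^2) ∧
    (∀ x y : Eu N, 0 < x (lastIdx N (by omega)) → 0 < y (lastIdx N (by omega)) →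
      0 ≤ hessDet u x * hessDet u y) := by
  obtain rfl : u = ffun N (by omega) n := funext hu
  exact ⟨hessDet_ffun _ (by omega) n, fun x y => hessDet_ffun_mul_nonneg _ (by omega) n⟩
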